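/- arXiv:1008.5209 — 4 statements merged into one kernel-verified Lean document; each statement's English description precedes it below -/
import Mathlib

section
/- (Dual of the proximal problem.) The dual problem attains its minimum, and every minimizer ξ* = (ξ*^g)_{g∈𝒢} of the dual problem satisfies w* = u − Σ_{g∈𝒢} ξ*^g, where w* is the unique minimizer of the primal proximal problem min_{w∈ℝ^p} ½‖u−w‖₂² + λΩ(w). -/
/-- The structured norm Ω(w) = Σ_{g∈𝒢} η_g · max_{j∈g} |w_j|. -/
noncomputable def Omega {p : ℕ} (G : Finset (Finset (Fin p))) (η : Finset (Fin p) → ℝ)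
    (w : Fin p → ℝ) : ℝ :=
  ∑ g ∈ G, η g * ⨆ j ∈ g, |w j|

/-- Objective of the primal proximal problem: ½‖u−w‖₂² + λΩ(w). -/
noncomputable def proxObj {p : ℕ} (G : Finset (Finset (Fin p))) (η : Finset (Fin p) → ℝ)
    (lam : ℝ) (u w : Fin p → ℝ) : ℝ :=
  (1 / 2) * ∑ j, (u j - w j) ^ 2 + lam * Omega G η w

/-- Dual feasibility: ξ^g_j = 0 for j ∉ g and ‖ξ^g‖₁ ≤ λη_g, for every g ∈ 𝒢. -/
def DualFeasible {p : ℕ} (G : Finset (Finset (Fin p))) (η : Finset (Fin p) → ℝ)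
    (lam : ℝ) (ξ : Finset (Fin p) → Fin p → ℝ) : Prop :=
  ∀ g ∈ G, (∀ j, j ∉ g → ξ g j = 0) ∧ ∑ j, |ξ g j| ≤ lam * η g

/-- Objective of the dual problem: ½‖u − Σ_{g∈𝒢} ξ^g‖₂². -/
noncomputable def dualObj {p : ℕ} (G : Finset (Finset (Fin p)))
    (u : Fin p → ℝ) (ξ : Finset (Fin p) → Fin p → ℝ) : ℝ :=
  (1 / 2) * ∑ j, (u j - ∑ g ∈ G, ξ g j) ^ 2

/- ### Auxiliary lemmas -/

lemma sup'_abs_nonneg {p : ℕ} (g : Finset (Fin p)) (hg : g.Nonempty) (w : Fin p → ℝ) :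
    0 ≤ g.sup' hg (fun j => |w j|) :=
  le_trans (abs_nonneg (w hg.choose)) (Finset.le_sup' (fun j => |w j|) hg.choose_spec)

lemma biSup_abs {p : ℕ} (hp : 1 ≤ p) (g : Finset (Fin p)) (hg : g.Nonempty) (w : Fin p → ℝ) :
    (⨆ j ∈ g, |w j|) = g.sup' hg (fun j => |w j|) := by
  have : Nonempty (Fin p) := ⟨⟨0, hp⟩⟩
  apply le_antisymm
  · apply Real.iSup_le _ (sup'_abs_nonneg g hg w)
    intro j
    by_cases h : j ∈ g
    · rw [ciSup_pos (f := fun _ : j ∈ g => |w j|) h]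
      exact Finset.le_sup' (fun j => |w j|) h
    · haveI : IsEmpty (j ∈ g) := ⟨h⟩
      rw [Real.iSup_of_isEmpty (fun _ : j ∈ g => |w j|)]
      exact sup'_abs_nonneg g hg w
  · apply Finset.sup'_le
    intro j hj
    have h1 : |w j| = ⨆ _ : j ∈ g, |w j| := (ciSup_pos (f := fun _ : j ∈ g => |w j|) hj).symm
    rw [h1]
    exact le_ciSup (f := fun j => ⨆ _ : j ∈ g, |w j|)
      (Set.Finite.bddAbove (Set.finite_range _)) j

/-- Hölder inequality for one group. -/
lemma group_holder {p : ℕ} (g : Finset (Fin p)) (hg : g.Nonempty) (v ξg : Fin p → ℝ) (c : ℝ)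
    (hsupp : ∀ j, j ∉ g → ξg j = 0) (hl1 : ∑ j, |ξg j| ≤ c) :
    ∑ j, v j * ξg j ≤ c * g.sup' hg (fun j => |v j|) := by
  set M := g.sup' hg (fun j => |v j|) with hM
  have hMn : 0 ≤ M := sup'_abs_nonneg g hg v
  calc ∑ j, v j * ξg j ≤ ∑ j, |ξg j| * M := by
        apply Finset.sum_le_sum
        intro j _
        by_cases h : j ∈ g
        · calc v j * ξg j ≤ |v j * ξg j| := le_abs_self _
            _ = |ξg j| * |v j| := by rw [abs_mul, mul_comm]
            _ ≤ |ξg j| * M :=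
              mul_le_mul_of_nonneg_left (Finset.le_sup' (fun j => |v j|) h) (abs_nonneg _)
        · simp [hsupp j h]
    _ = (∑ j, |ξg j|) * M := (Finset.sum_mul _ _ _).symm
    _ ≤ c * M := mul_le_mul_of_nonneg_right hl1 hMn

/-- The inner product with a feasible dual sum is at most λΩ. -/
lemma inner_le_lam_omega {p : ℕ} (hp : 1 ≤ p) (G : Finset (Finset (Fin p)))
    (η : Finset (Fin p) → ℝ) (hne : ∀ g ∈ G, g.Nonempty) (lam : ℝ)
    (ξ : Finset (Fin p) → Fin p → ℝ) (hfeas : DualFeasible G η lam ξ) (v : Fin p → ℝ) :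
    ∑ j, v j * (∑ g ∈ G, ξ g j) ≤ lam * Omega G η v := by
  have h1 : ∑ j, v j * (∑ g ∈ G, ξ g j) = ∑ g ∈ G, ∑ j, v j * ξ g j := by
    rw [Finset.sum_comm]
    exact Finset.sum_congr rfl fun j _ => Finset.mul_sum _ _ _
  rw [h1, Omega, Finset.mul_sum]
  apply Finset.sum_le_sum
  intro g hg
  have hgne := hne g hg
  rw [biSup_abs hp g hgne v, ← mul_assoc]
  exact group_holder g hgne v (ξ g) (lam * η g) (hfeas g hg).1 (hfeas g hg).2

/-- the dual problem attains its minimum, and every dual minimizer ξ*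
    satisfies w* = u − Σ_g ξ*^g, where w* is the (unique) primal minimizer. -/
theorem dual_attained_and_primal_dual_link
    (p : ℕ) (hp : 1 ≤ p) (G : Finset (Finset (Fin p))) (η : Finset (Fin p) → ℝ)
    (hη : ∀ g ∈ G, 0 < η g) (hne : ∀ g ∈ G, g.Nonempty)
    (lam : ℝ) (hlam : 0 < lam) (u : Fin p → ℝ) :
    (∃ ξ : Finset (Fin p) → Fin p → ℝ, DualFeasible G η lam ξ ∧
        ∀ ξ', DualFeasible G η lam ξ' → dualObj G u ξ ≤ dualObj G u ξ') ∧
    (∀ ξ : Finset (Fin p) → Fin p → ℝ, DualFeasible G η lam ξ →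
        (∀ ξ', DualFeasible G η lam ξ' → dualObj G u ξ ≤ dualObj G u ξ') →
        ∀ w : Fin p → ℝ, (∀ w', proxObj G η lam u w ≤ proxObj G η lam u w') →
          w = fun j => u j - ∑ g ∈ G, ξ g j) := by
  classical
  have hev : ∀ (g : Finset (Fin p)) (j : Fin p),
      Continuous fun ξ : Finset (Fin p) → Fin p → ℝ => ξ g j :=
    fun g j => (continuous_apply j).comp (continuous_apply g)
  constructor
  · -- existence of a dual minimizer
    set K : Set (Finset (Fin p) → Fin p → ℝ) :=
      {ξ | DualFeasible G η lam ξ ∧ ∀ g, g ∉ G → ∀ j, ξ g j = 0} with hK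
    have hKne : K.Nonempty := by
      refine ⟨0, ⟨fun g hg => ⟨fun j _ => rfl, ?_⟩, fun g _ j => rfl⟩⟩
      simp only [Pi.zero_apply, abs_zero, Finset.sum_const_zero]
      exact mul_nonneg hlam.le (hη g hg).le
    have hKclosed : IsClosed K := by
      have h2 : K = ({ξ | ∀ g ∈ G, ∑ j, |ξ g j| ≤ lam * η g} ∩
          ⋂ g, ⋂ j, {ξ : Finset (Fin p) → Fin p → ℝ | ¬(g ∈ G ∧ j ∈ g) → ξ g j = 0}) := by
        ext ξ
        simp only [hK, Set.mem_inter_iff, Set.mem_setOf_eq, Set.mem_iInter, DualFeasible]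
        constructor
        · rintro ⟨h1, h2⟩
          refine ⟨fun g hg => (h1 g hg).2, fun g j hcond => ?_⟩
          by_cases hg : g ∈ G
          · exact (h1 g hg).1 j (fun hj => hcond ⟨hg, hj⟩)
          · exact h2 g hg j
        · rintro ⟨h1, h2⟩
          exact ⟨fun g hg => ⟨fun j hj => h2 g j (fun hc => hj hc.2), h1 g hg⟩,
            fun g hg j => h2 g j (fun hc => hg hc.1)⟩
      rw [h2]
      apply IsClosed.inter
      · have : {ξ : Finset (Fin p) → Fin p → ℝ | ∀ g ∈ G, ∑ j, |ξ g j| ≤ lam * η g} =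
            ⋂ g ∈ (G : Set (Finset (Fin p))), {ξ | ∑ j, |ξ g j| ≤ lam * η g} := by
          ext ξ; simp
        rw [this]
        exact isClosed_biInter fun g _ =>
          isClosed_le (continuous_finset_sum _ fun j _ => (hev g j).abs) continuous_const
      · apply isClosed_iInter; intro g
        apply isClosed_iInter; intro j
        by_cases hc : g ∈ G ∧ j ∈ g
        · have huniv : {ξ : Finset (Fin p) → Fin p → ℝ | ¬(g ∈ G ∧ j ∈ g) → ξ g j = 0} =
              Set.univ := by ext ξ; simp [hc]
          rw [huniv]; exact isClosed_univ
        · have hzero : {ξ : Finset (Fin p) → Fin p → ℝ | ¬(g ∈ G ∧ j ∈ g) → ξ g j = 0} =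
              {ξ | ξ g j = 0} := by ext ξ; simp [hc]
          rw [hzero]; exact isClosed_eq (hev g j) continuous_const
    have hKcompact : IsCompact K := by
      have hCc : IsCompact (Set.univ.pi fun g : Finset (Fin p) =>
          Set.univ.pi fun _ : Fin p => Set.Icc (-(lam * |η g|)) (lam * |η g|)) :=
        isCompact_univ_pi fun g => isCompact_univ_pi fun _ => isCompact_Icc
      apply hCc.of_isClosed_subset hKclosed
      intro ξ hξ
      rw [Set.mem_pi]
      intro g _
      rw [Set.mem_pi]
      intro j _
      have hB : 0 ≤ lam * |η g| := mul_nonneg hlam.le (abs_nonneg _)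
      by_cases hg : g ∈ G
      · have h1 : |ξ g j| ≤ ∑ j', |ξ g j'| :=
          Finset.single_le_sum (f := fun j' : Fin p => |ξ g j'|) (fun j' _ => abs_nonneg _)
            (Finset.mem_univ j)
        have h2 : ∑ j', |ξ g j'| ≤ lam * η g := (hξ.1 g hg).2
        have h3 : |ξ g j| ≤ lam * |η g| := by
          rw [abs_of_pos (hη g hg)]; exact le_trans h1 h2
        exact ⟨neg_le_of_abs_le h3, le_of_abs_le h3⟩
      · rw [hξ.2 g hg j]
        exact ⟨neg_nonpos_of_nonneg hB, hB⟩
    have hcont : Continuous (dualObj G u) := by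
      unfold dualObj
      exact continuous_const.mul (continuous_finset_sum _ fun j _ =>
        (continuous_const.sub (continuous_finset_sum _ fun g _ => hev g j)).pow 2)
    obtain ⟨ξ, hξK, hmin⟩ := hKcompact.exists_isMinOn hKne hcont.continuousOn
    refine ⟨ξ, hξK.1, ?_⟩
    intro ξ' hξ'
    set ξ'' : Finset (Fin p) → Fin p → ℝ := fun g => if g ∈ G then ξ' g else 0 with hξ''def
    have hmem : ξ'' ∈ K := by
      constructor
      · intro g hg
        simp only [hξ''def, if_pos hg]
        exact hξ' g hg
      · intro g hg j
        simp [hξ''def, if_neg hg]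
    have heq : dualObj G u ξ'' = dualObj G u ξ' := by
      unfold dualObj
      congr 1
      apply Finset.sum_congr rfl
      intro j _
      congr 2
      apply Finset.sum_congr rfl
      intro g hg
      simp [hξ''def, if_pos hg]
    calc dualObj G u ξ ≤ dualObj G u ξ'' := hmin hmem
      _ = dualObj G u ξ' := heq
  · -- primal-dual link
    intro ξ hfeas hmin w hw
    set s : Fin p → ℝ := fun j => ∑ g ∈ G, ξ g j with hs
    set wbar : Fin p → ℝ := fun j => u j - s j with hwbar
    -- choose argmax indices
    have hch : ∀ g : Finset (Fin p), ∃ j0 : Fin p,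
        g ∈ G → (j0 ∈ g ∧ ∀ j ∈ g, |wbar j| ≤ |wbar j0|) := by
      intro g
      by_cases hg : g ∈ G
      · obtain ⟨b, hb, hmax⟩ := Finset.exists_max_image g (fun j => |wbar j|) (hne g hg)
        exact ⟨b, fun _ => ⟨hb, hmax⟩⟩
      · exact ⟨⟨0, hp⟩, fun h => absurd h hg⟩
    choose j0 hj0 using hch
    set sgn : Fin p → ℝ := fun j => if wbar j < 0 then -1 else 1 with hsgn
    have hsgn_abs : ∀ j, |sgn j| = 1 := by
      intro j; by_cases h : wbar j < 0 <;> simp [hsgn, h]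
    have hsgn_mul : ∀ j, wbar j * sgn j = |wbar j| := by
      intro j
      by_cases h : wbar j < 0
      · simp [hsgn, h, abs_of_neg h]
      · simp [hsgn, h, abs_of_nonneg (not_lt.mp h)]
    set ξhat : Finset (Fin p) → Fin p → ℝ :=
      fun g j => if g ∈ G ∧ j = j0 g then lam * η g * sgn (j0 g) else 0 with hξhat
    -- sup' of wbar over g equals |wbar (j0 g)|
    have hsup : ∀ g (hg : g ∈ G), g.sup' (hne g hg) (fun j => |wbar j|) = |wbar (j0 g)| := by
      intro g hg
      exact le_antisymm (Finset.sup'_le _ _ ((hj0 g hg).2))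
        (Finset.le_sup' (fun j => |wbar j|) (hj0 g hg).1)
    have hineq : ∀ g ∈ G, ∑ j, |ξhat g j| ≤ lam * η g := by
      intro g hg
      have : ∑ j, |ξhat g j| = |lam * η g * sgn (j0 g)| := by
        rw [Finset.sum_eq_single (j0 g)]
        · simp [hξhat, hg]
        · intro b _ hb; simp [hξhat, hb]
        · intro h; exact absurd (Finset.mem_univ _) h
      rw [this, abs_mul, hsgn_abs, mul_one, abs_mul,
        abs_of_pos hlam, abs_of_pos (hη g hg)]
    have hfeashat : DualFeasible G η lam ξhat := by
      intro g hg
      refine ⟨fun j hj => ?_, hineq g hg⟩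
      have : ¬(g ∈ G ∧ j = j0 g) := by
        rintro ⟨-, rfl⟩; exact hj (hj0 g hg).1
      simp [hξhat, this]
    -- inner product of wbar with ξhat-sum equals lam * Omega wbar
    set y : Fin p → ℝ := fun j => ∑ g ∈ G, ξhat g j with hy
    have hinner_hat : ∑ j, wbar j * y j = lam * Omega G η wbar := by
      have h1 : ∑ j, wbar j * y j = ∑ g ∈ G, ∑ j, wbar j * ξhat g j := by
        rw [Finset.sum_comm]
        exact Finset.sum_congr rfl fun j _ => Finset.mul_sum _ _ _
      rw [h1, Omega, Finset.mul_sum]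
      apply Finset.sum_congr rfl
      intro g hg
      have h2 : ∑ j, wbar j * ξhat g j = wbar (j0 g) * (lam * η g * sgn (j0 g)) := by
        rw [Finset.sum_eq_single (j0 g)]
        · simp [hξhat, hg]
        · intro b _ hb; simp [hξhat, hb]
        · intro h; exact absurd (Finset.mem_univ _) h
      rw [h2, biSup_abs hp g (hne g hg) wbar, hsup g hg]
      calc wbar (j0 g) * (lam * η g * sgn (j0 g))
          = lam * η g * (wbar (j0 g) * sgn (j0 g)) := by ring
        _ = lam * (η g * |wbar (j0 g)|) := by rw [hsgn_mul]; ring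
    -- dual optimality: ⟨wbar, y - s⟩ ≤ 0, hence λΩ(wbar) = ⟨wbar, s⟩
    have hkey : ∑ j, wbar j * y j ≤ ∑ j, wbar j * s j := by
      set A : ℝ := ∑ j, wbar j * (y j - s j) with hA
      set B : ℝ := ∑ j, (y j - s j) ^ 2 with hB
      have hBnn : 0 ≤ B := Finset.sum_nonneg fun j _ => sq_nonneg _
      have hstep : ∀ t : ℝ, 0 < t → t ≤ 1 → t * A ≤ t ^ 2 / 2 * B := by
        intro t ht ht1
        have hfeast : DualFeasible G η lam (fun g j => ξ g j + t * (ξhat g j - ξ g j)) := by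
          intro g hg
          refine ⟨fun j hj => by
            simp [(hfeas g hg).1 j hj, (hfeashat g hg).1 j hj], ?_⟩
          have hb : ∀ j, |ξ g j + t * (ξhat g j - ξ g j)| ≤
              (1 - t) * |ξ g j| + t * |ξhat g j| := by
            intro j
            have : ξ g j + t * (ξhat g j - ξ g j) = (1 - t) * ξ g j + t * ξhat g j := by ring
            rw [this]
            calc |(1 - t) * ξ g j + t * ξhat g j| ≤ |(1 - t) * ξ g j| + |t * ξhat g j| :=
                abs_add_le _ _
              _ = (1 - t) * |ξ g j| + t * |ξhat g j| := by
                rw [abs_mul, abs_mul, abs_of_nonneg (by linarith), abs_of_nonneg ht.le]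
          calc ∑ j, |ξ g j + t * (ξhat g j - ξ g j)|
              ≤ ∑ j, ((1 - t) * |ξ g j| + t * |ξhat g j|) :=
                Finset.sum_le_sum fun j _ => hb j
            _ = (1 - t) * (∑ j, |ξ g j|) + t * (∑ j, |ξhat g j|) := by
                rw [Finset.sum_add_distrib, Finset.mul_sum, Finset.mul_sum]
            _ ≤ (1 - t) * (lam * η g) + t * (lam * η g) := by
                have h1 := (hfeas g hg).2
                have h2 := hineq g hg
                have h3 : (0:ℝ) ≤ 1 - t := by linarith
                nlinarith
            _ = lam * η g := by ring
        have hle := hmin _ hfeast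
        have hsum : ∀ j, (∑ g ∈ G, (ξ g j + t * (ξhat g j - ξ g j))) =
            s j + t * (y j - s j) := by
          intro j
          have h1 : ∑ g ∈ G, ξ g j = s j := rfl
          have h2 : ∑ g ∈ G, ξhat g j = y j := rfl
          rw [Finset.sum_add_distrib, ← Finset.mul_sum, Finset.sum_sub_distrib, h1, h2]
        have hexp : dualObj G u (fun g j => ξ g j + t * (ξhat g j - ξ g j)) =
            dualObj G u ξ - t * A + t ^ 2 / 2 * B := by
          unfold dualObj
          have h1 : ∀ j, (∑ g ∈ G, ξ g j) = s j := fun _ => rfl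
          simp only [hsum, h1]
          rw [hA, hB]
          rw [Finset.mul_sum, Finset.mul_sum, Finset.mul_sum, Finset.mul_sum,
            ← Finset.sum_sub_distrib, ← Finset.sum_add_distrib]
          apply Finset.sum_congr rfl
          intro j _
          simp only [hwbar]
          ring
        rw [hexp] at hle
        linarith
      have hA0 : A ≤ 0 := by
        by_contra hA'
        push_neg at hA'
        have h1 := hstep 1 one_pos le_rfl
        have hBpos : 0 < B := by nlinarith
        have ht : 0 < min 1 (A / B) := lt_min one_pos (div_pos hA' hBpos)
        have h2 := hstep _ ht (min_le_left _ _)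
        have h3 : min 1 (A / B) ≤ A / B := min_le_right _ _
        set t := min 1 (A / B)
        have h4 : t ^ 2 / 2 * B = t * (t * B) / 2 := by ring
        have h5 : t * B ≤ A := by
          calc t * B ≤ (A / B) * B := by nlinarith
            _ = A := by field_simp
        nlinarith
      have : ∑ j, wbar j * y j - ∑ j, wbar j * s j = A := by
        rw [hA, ← Finset.sum_sub_distrib]
        apply Finset.sum_congr rfl; intro j _; ring
      linarith
    have hinner_s_le : ∑ j, wbar j * s j ≤ lam * Omega G η wbar :=
      inner_le_lam_omega hp G η hne lam ξ hfeas wbar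
    have heqA : ∑ j, wbar j * s j = lam * Omega G η wbar :=
      le_antisymm hinner_s_le (by rw [← hinner_hat]; exact hkey)
    -- wbar is a primal minimizer
    have hwbar_min : ∀ w', proxObj G η lam u wbar ≤ proxObj G η lam u w' := by
      intro w'
      have h1 : lam * Omega G η w' ≥ ∑ j, w' j * s j :=
        inner_le_lam_omega hp G η hne lam ξ hfeas w'
      have h2 : proxObj G η lam u wbar = (1/2) * ∑ j, (s j)^2 + ∑ j, wbar j * s j := by
        unfold proxObj
        rw [← heqA]
        congr 1
        apply congrArg
        apply Finset.sum_congr rfl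
        intro j _
        have : u j - wbar j = s j := by simp [hwbar]
        rw [this]
      have h3 : (1/2) * ∑ j, (u j - w' j)^2 + ∑ j, w' j * s j =
          (1/2) * ∑ j, (s j)^2 + ∑ j, wbar j * s j + (1/2) * ∑ j, (u j - w' j - s j)^2 := by
        rw [Finset.mul_sum, Finset.mul_sum, Finset.mul_sum]
        rw [← Finset.sum_add_distrib, ← Finset.sum_add_distrib, ← Finset.sum_add_distrib]
        apply Finset.sum_congr rfl
        intro j _
        have : wbar j = u j - s j := rfl
        rw [this]; ring
      have h4 : 0 ≤ (1/2) * ∑ j, (u j - w' j - s j)^2 :=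
        mul_nonneg (by norm_num) (Finset.sum_nonneg fun j _ => sq_nonneg _)
      calc proxObj G η lam u wbar = (1/2) * ∑ j, (s j)^2 + ∑ j, wbar j * s j := h2
        _ ≤ (1/2) * ∑ j, (u j - w' j)^2 + ∑ j, w' j * s j := by rw [h3]; linarith
        _ ≤ (1/2) * ∑ j, (u j - w' j)^2 + lam * Omega G η w' := by linarith
        _ = proxObj G η lam u w' := rfl
    -- uniqueness of primal minimizer: w = wbar
    have hEq : proxObj G η lam u w = proxObj G η lam u wbar :=
      le_antisymm (hw wbar) (hwbar_min w)
    set m : Fin p → ℝ := fun j => (w j + wbar j) / 2 with hm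
    have hOm : Omega G η m ≤ (1/2) * Omega G η w + (1/2) * Omega G η wbar := by
      unfold Omega
      rw [Finset.mul_sum, Finset.mul_sum, ← Finset.sum_add_distrib]
      apply Finset.sum_le_sum
      intro g hg
      have hgne := hne g hg
      rw [biSup_abs hp g hgne m, biSup_abs hp g hgne w, biSup_abs hp g hgne wbar]
      have hsle : g.sup' hgne (fun j => |m j|) ≤
          (1/2) * g.sup' hgne (fun j => |w j|) + (1/2) * g.sup' hgne (fun j => |wbar j|) := by
        apply Finset.sup'_le
        intro j hj
        have h1 : |m j| ≤ (1/2) * |w j| + (1/2) * |wbar j| := by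
          simp only [hm]
          have habs := abs_add_le (w j) (wbar j)
          rw [abs_div, abs_two]
          linarith
        have h2 : |w j| ≤ g.sup' hgne (fun j => |w j|) :=
          Finset.le_sup' (fun j => |w j|) hj
        have h3 : |wbar j| ≤ g.sup' hgne (fun j => |wbar j|) :=
          Finset.le_sup' (fun j => |wbar j|) hj
        linarith
      have hηg := (hη g hg).le
      calc η g * g.sup' hgne (fun j => |m j|)
          ≤ η g * ((1/2) * g.sup' hgne (fun j => |w j|)
              + (1/2) * g.sup' hgne (fun j => |wbar j|)) :=
            mul_le_mul_of_nonneg_left hsle hηg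
        _ = (1/2) * (η g * g.sup' hgne fun j => |w j|)
              + (1/2) * (η g * g.sup' hgne fun j => |wbar j|) := by ring
    have hQuad : (1/2) * ∑ j, (u j - m j)^2 =
        (1/4) * ∑ j, (u j - w j)^2 + (1/4) * ∑ j, (u j - wbar j)^2
          - (1/8) * ∑ j, (w j - wbar j)^2 := by
      rw [Finset.mul_sum, Finset.mul_sum, Finset.mul_sum, Finset.mul_sum,
        ← Finset.sum_add_distrib, ← Finset.sum_sub_distrib]
      apply Finset.sum_congr rfl
      intro j _
      simp only [hm]; ring
    have hmid : proxObj G η lam u m ≤ (1/2) * proxObj G η lam u w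
        + (1/2) * proxObj G η lam u wbar - (1/8) * ∑ j, (w j - wbar j)^2 := by
      have hOm' : lam * Omega G η m ≤
          (1/2) * (lam * Omega G η w) + (1/2) * (lam * Omega G η wbar) := by
        have h := mul_le_mul_of_nonneg_left hOm hlam.le
        nlinarith [h]
      unfold proxObj
      linarith [hQuad, hOm']
    have hQ0 : ∑ j, (w j - wbar j)^2 ≤ 0 := by
      have h1 := hw m
      have h2 : proxObj G η lam u w ≤ (1/2) * proxObj G η lam u w
          + (1/2) * proxObj G η lam u wbar - (1/8) * ∑ j, (w j - wbar j)^2 :=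
        le_trans h1 hmid
      rw [← hEq] at h2
      linarith
    have : ∀ j, w j - wbar j = 0 := by
      intro j
      have h := (Finset.sum_eq_zero_iff_of_nonneg (fun j _ => sq_nonneg (w j - wbar j))).mp
        (le_antisymm hQ0 (Finset.sum_nonneg fun j _ => sq_nonneg _)) j (Finset.mem_univ j)
      exact pow_eq_zero_iff (n := 2) (by norm_num) |>.mp h
    funext j
    have := this j
    simp only [hwbar, hs] at this ⊢
    linarith
end

section
/- (Optimality conditions of the dual problem.) Let w ∈ ℝ^p and let ξ = (ξ^g)_{g∈𝒢} be dual-feasible. Then w is the minimizer of the primal proximal problem and ξ is a minimizer of the dual problem if and only if w = u − Σ_{g∈𝒢} ξ^g and, for every g ∈ 𝒢, either ( Σ_{j∈g} w_j ξ^g_j = (max_{j∈g}|w_j|) · ‖ξ^g‖₁ and ‖ξ^g‖₁ = λη_g ), or w_j = 0 for all j ∈ g. -/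
section Helpers
variable {p : ℕ}

lemma abs_le_groupSup (hp : 0 < p) {g : Finset (Fin p)} {w : Fin p → ℝ} {j : Fin p}
    (hj : j ∈ g) : |w j| ≤ ⨆ k ∈ g, |w k| := by
  haveI : Nonempty (Fin p) := ⟨⟨0, hp⟩⟩
  have h2 : (⨆ _ : j ∈ g, |w j|) ≤ ⨆ k ∈ g, |w k| :=
    le_ciSup (f := fun k => ⨆ _ : k ∈ g, |w k|)
      (Set.Finite.bddAbove (Set.finite_range _)) j
  rwa [ciSup_pos hj] at h2

lemma groupSup_le (hp : 0 < p) {g : Finset (Fin p)} {w : Fin p → ℝ} {b : ℝ}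
    (hb : 0 ≤ b) (h : ∀ j ∈ g, |w j| ≤ b) : (⨆ j ∈ g, |w j|) ≤ b := by
  haveI : Nonempty (Fin p) := ⟨⟨0, hp⟩⟩
  refine ciSup_le fun j => ?_
  by_cases hj : j ∈ g
  · rw [ciSup_pos hj]; exact h j hj
  · haveI : IsEmpty (j ∈ g) := ⟨hj⟩
    rw [iSup_of_empty', Real.sSup_empty]
    exact hb

lemma groupSup_nonneg (hp : 0 < p) {g : Finset (Fin p)} {w : Fin p → ℝ}
    (hg : g.Nonempty) : 0 ≤ ⨆ j ∈ g, |w j| := by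
  obtain ⟨j, hj⟩ := hg
  exact (abs_nonneg _).trans (abs_le_groupSup hp hj)

lemma inner_le_groupSup_mul (hp : 0 < p) {g : Finset (Fin p)} {w v : Fin p → ℝ}
    (hsupp : ∀ j, j ∉ g → v j = 0) :
    ∑ j, w j * v j ≤ (⨆ j ∈ g, |w j|) * ∑ j, |v j| := by
  rw [Finset.mul_sum]
  refine Finset.sum_le_sum fun j _ => ?_
  by_cases hj : j ∈ g
  · calc w j * v j ≤ |w j * v j| := le_abs_self _
      _ = |w j| * |v j| := abs_mul _ _
      _ ≤ (⨆ k ∈ g, |w k|) * |v j| :=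
        mul_le_mul_of_nonneg_right (abs_le_groupSup hp hj) (abs_nonneg _)
  · simp [hsupp j hj]

lemma key_identity (G : Finset (Finset (Fin p))) (η : Finset (Fin p) → ℝ)
    (lam : ℝ) (u w : Fin p → ℝ) (ξ : Finset (Fin p) → Fin p → ℝ) :
    proxObj G η lam u w + dualObj G u ξ
      = (1 / 2) * ∑ j, (u j) ^ 2
        + (1 / 2) * ∑ j, (w j - (u j - ∑ g ∈ G, ξ g j)) ^ 2
        + ∑ g ∈ G, (lam * η g * (⨆ j ∈ g, |w j|) - ∑ j, w j * ξ g j) := by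
  unfold proxObj dualObj Omega
  have hswap : ∑ g ∈ G, ∑ j, w j * ξ g j = ∑ j, w j * ∑ g ∈ G, ξ g j := by
    rw [Finset.sum_comm]
    exact Finset.sum_congr rfl fun j _ => (Finset.mul_sum _ _ _).symm
  have hgap : ∑ g ∈ G, (lam * η g * (⨆ j ∈ g, |w j|) - ∑ j, w j * ξ g j)
      = lam * ∑ g ∈ G, η g * (⨆ j ∈ g, |w j|) - ∑ j, w j * ∑ g ∈ G, ξ g j := by
    rw [Finset.sum_sub_distrib, hswap, Finset.mul_sum]
    ring_nf
  rw [hgap]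
  have hquad : ∑ j, ((u j - w j) ^ 2 + (u j - ∑ g ∈ G, ξ g j) ^ 2)
      = ∑ j, ((u j) ^ 2 + (w j - (u j - ∑ g ∈ G, ξ g j)) ^ 2
          - 2 * (w j * ∑ g ∈ G, ξ g j)) :=
    Finset.sum_congr rfl fun j _ => by ring
  rw [Finset.sum_add_distrib] at hquad
  rw [Finset.sum_sub_distrib, Finset.sum_add_distrib, ← Finset.mul_sum] at hquad
  linarith

lemma gap_nonneg (hp : 0 < p) {G : Finset (Finset (Fin p))} {η : Finset (Fin p) → ℝ}
    {lam : ℝ} (hne : ∀ g ∈ G, g.Nonempty)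
    {ξ : Finset (Fin p) → Fin p → ℝ} (hfeas : DualFeasible G η lam ξ)
    (w : Fin p → ℝ) {g : Finset (Fin p)} (hg : g ∈ G) :
    ∑ j, w j * ξ g j ≤ lam * η g * (⨆ j ∈ g, |w j|) := by
  have hM : 0 ≤ ⨆ j ∈ g, |w j| := groupSup_nonneg hp (hne g hg)
  calc ∑ j, w j * ξ g j ≤ (⨆ j ∈ g, |w j|) * ∑ j, |ξ g j| :=
        inner_le_groupSup_mul hp (hfeas g hg).1
    _ ≤ (⨆ j ∈ g, |w j|) * (lam * η g) :=
        mul_le_mul_of_nonneg_left (hfeas g hg).2 hM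
    _ = lam * η g * (⨆ j ∈ g, |w j|) := by ring

lemma weak_duality (hp : 0 < p) {G : Finset (Finset (Fin p))} {η : Finset (Fin p) → ℝ}
    {lam : ℝ} (hne : ∀ g ∈ G, g.Nonempty) (u w : Fin p → ℝ)
    {ξ : Finset (Fin p) → Fin p → ℝ} (hfeas : DualFeasible G η lam ξ) :
    (1 / 2) * ∑ j, (u j) ^ 2 ≤ proxObj G η lam u w + dualObj G u ξ := by
  rw [key_identity]
  have h1 : (0:ℝ) ≤ ∑ j, (w j - (u j - ∑ g ∈ G, ξ g j)) ^ 2 :=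
    Finset.sum_nonneg fun j _ => sq_nonneg _
  have h2 : (0:ℝ) ≤ ∑ g ∈ G, (lam * η g * (⨆ j ∈ g, |w j|) - ∑ j, w j * ξ g j) :=
    Finset.sum_nonneg fun g hg => sub_nonneg.2 (gap_nonneg hp hne hfeas w hg)
  linarith

/-- First-order optimality of the dual: for each group the inner product with the
residual attains the maximum `λ η_g · max_{j∈g} |r_j|`. -/
lemma dual_opt_inner (hp : 0 < p) {G : Finset (Finset (Fin p))} {η : Finset (Fin p) → ℝ}
    (hη : ∀ g ∈ G, 0 < η g) (hne : ∀ g ∈ G, g.Nonempty)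
    {lam : ℝ} (hlam : 0 < lam) (u : Fin p → ℝ)
    {ξ : Finset (Fin p) → Fin p → ℝ} (hfeas : DualFeasible G η lam ξ)
    (hdual : ∀ ξ', DualFeasible G η lam ξ' → dualObj G u ξ ≤ dualObj G u ξ')
    {g₀ : Finset (Fin p)} (hg₀ : g₀ ∈ G) :
    ∑ j, (u j - ∑ g ∈ G, ξ g j) * ξ g₀ j
      = lam * η g₀ * (⨆ j ∈ g₀, |u j - ∑ g ∈ G, ξ g j|) := by
  set r : Fin p → ℝ := fun j => u j - ∑ g ∈ G, ξ g j with hr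
  refine le_antisymm (gap_nonneg hp hne hfeas r hg₀) ?_
  by_contra hlt
  push_neg at hlt
  obtain ⟨j₀, hj₀, hmax⟩ := g₀.exists_max_image (fun j => |r j|) (hne g₀ hg₀)
  have hM : (⨆ j ∈ g₀, |r j|) = |r j₀| :=
    le_antisymm (groupSup_le hp (abs_nonneg _) hmax) (abs_le_groupSup hp hj₀)
  have hηpos : 0 < lam * η g₀ := mul_pos hlam (hη g₀ hg₀)
  set c : ℝ := if r j₀ < 0 then -(lam * η g₀) else lam * η g₀ with hc
  have hc1 : |c| = lam * η g₀ := by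
    by_cases h : r j₀ < 0 <;> simp [hc, h, abs_of_pos hηpos, abs_of_neg, hηpos]
  have hc2 : r j₀ * c = lam * η g₀ * |r j₀| := by
    by_cases h : r j₀ < 0
    · rw [hc, if_pos h, abs_of_neg h]; ring
    · rw [hc, if_neg h, abs_of_nonneg (not_lt.1 h)]; ring
  set a : Fin p → ℝ := fun j => if j = j₀ then c else 0 with ha
  set d : Fin p → ℝ := fun j => a j - ξ g₀ j with hd
  have hsa : ∑ j, |a j| = lam * η g₀ := by
    have h1 : ∀ j ∈ Finset.univ, |a j| = if j = j₀ then lam * η g₀ else 0 := by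
      intro j _
      by_cases h : j = j₀
      · simp only [ha]; rw [if_pos h, if_pos h]; exact hc1
      · simp only [ha]; rw [if_neg h, if_neg h, abs_zero]
    rw [Finset.sum_congr rfl h1, Finset.sum_ite_eq' Finset.univ j₀ (fun _ => lam * η g₀),
      if_pos (Finset.mem_univ _)]
  have hra : ∑ j, r j * a j = lam * η g₀ * (⨆ j ∈ g₀, |r j|) := by
    rw [hM]
    have h1 : ∀ j ∈ Finset.univ, r j * a j = if j = j₀ then lam * η g₀ * |r j₀| else 0 := by
      intro j _
      by_cases h : j = j₀
      · simp only [ha]; rw [if_pos h, if_pos h, h]; exact hc2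
      · simp only [ha]; rw [if_neg h, if_neg h, mul_zero]
    rw [Finset.sum_congr rfl h1, Finset.sum_ite_eq' Finset.univ j₀
      (fun _ => lam * η g₀ * |r j₀|), if_pos (Finset.mem_univ _)]
  set cg : ℝ := lam * η g₀ * (⨆ j ∈ g₀, |r j|) - ∑ j, r j * ξ g₀ j with hcg
  have hcgpos : 0 < cg := by rw [hcg]; linarith
  have hrd : ∑ j, r j * d j = cg := by
    rw [hcg, ← hra, ← Finset.sum_sub_distrib]
    exact Finset.sum_congr rfl fun j _ => by rw [hd]; ring
  set D : ℝ := ∑ j, d j ^ 2 with hD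
  have hDnn : 0 ≤ D := Finset.sum_nonneg fun j _ => sq_nonneg _
  have hDpos : 0 < D := by
    rcases hDnn.lt_or_eq with h | h
    · exact h
    · exfalso
      have hall : ∀ j ∈ Finset.univ, d j ^ 2 = 0 :=
        (Finset.sum_eq_zero_iff_of_nonneg fun j _ => sq_nonneg _).1 h.symm
      have hd0 : ∀ j, d j = 0 := fun j =>
        pow_eq_zero_iff two_ne_zero |>.1 (hall j (Finset.mem_univ j))
      rw [Finset.sum_eq_zero (fun j _ => by rw [hd0 j, mul_zero])] at hrd
      exact hcgpos.ne' hrd.symm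
  set t : ℝ := min 1 (cg / D) with ht
  have ht0 : 0 < t := lt_min one_pos (div_pos hcgpos hDpos)
  have ht1 : t ≤ 1 := min_le_left _ _
  have htD : t * D ≤ cg := by
    have : t ≤ cg / D := min_le_right _ _
    calc t * D ≤ (cg / D) * D := mul_le_mul_of_nonneg_right this hDnn
      _ = cg := by field_simp
  set ξ' : Finset (Fin p) → Fin p → ℝ :=
    fun h => if h = g₀ then (fun j => ξ g₀ j + t * d j) else ξ h with hξ'
  have hfeas' : DualFeasible G η lam ξ' := by
    intro h hh
    by_cases hhg : h = g₀
    · subst hhg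
      constructor
      · intro j hj
        have hξ0 := (hfeas h hh).1 j hj
        have haj : a j = 0 := by
          rw [ha]; exact if_neg (fun he => hj (by rw [he]; exact hj₀))
        simp [hξ', hd, haj, hξ0]
      · have hbound : ∀ j, |ξ' h j| ≤ (1 - t) * |ξ h j| + t * |a j| := by
          intro j
          have : ξ' h j = (1 - t) * ξ h j + t * a j := by
            simp only [hξ', if_pos rfl, hd]; ring
          rw [this]
          calc |(1 - t) * ξ h j + t * a j| ≤ |(1 - t) * ξ h j| + |t * a j| := abs_add_le _ _
            _ = (1 - t) * |ξ h j| + t * |a j| := by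
                rw [abs_mul, abs_mul, abs_of_nonneg (by linarith), abs_of_nonneg ht0.le]
        calc ∑ j, |ξ' h j| ≤ ∑ j, ((1 - t) * |ξ h j| + t * |a j|) :=
              Finset.sum_le_sum fun j _ => hbound j
          _ = (1 - t) * ∑ j, |ξ h j| + t * ∑ j, |a j| := by
              rw [Finset.sum_add_distrib, Finset.mul_sum, Finset.mul_sum]
          _ ≤ (1 - t) * (lam * η h) + t * (lam * η h) := by
              have h1 := (hfeas h hh).2
              have h2 : t * ∑ j, |a j| = t * (lam * η h) := by rw [hsa]
              nlinarith
          _ = lam * η h := by ring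
    · have hEq : ξ' h = ξ h := by rw [hξ']; exact if_neg hhg
      rw [hEq]
      exact hfeas h hh
  have hs' : ∀ j, ∑ g ∈ G, ξ' g j = (∑ g ∈ G, ξ g j) + t * d j := by
    intro j
    have hterm : ∀ g ∈ G, ξ' g j = ξ g j + (if g = g₀ then t * d j else 0) := by
      intro g _
      by_cases h : g = g₀ <;> simp [hξ', h]
    rw [Finset.sum_congr rfl hterm, Finset.sum_add_distrib,
      Finset.sum_ite_eq' G g₀ (fun _ => t * d j), if_pos hg₀]
  have hval : dualObj G u ξ' = dualObj G u ξ - t * cg + t ^ 2 / 2 * D := by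
    unfold dualObj
    have hterm : ∀ j, (u j - ∑ g ∈ G, ξ' g j) ^ 2
        = (u j - ∑ g ∈ G, ξ g j) ^ 2 - 2 * (r j * d j) * t + t ^ 2 * d j ^ 2 := by
      intro j
      rw [hs' j, hr]
      ring
    rw [Finset.sum_congr rfl fun j _ => hterm j]
    have h2 : ∑ x, 2 * (r x * d x) * t = 2 * t * cg := by
      rw [← hrd, Finset.mul_sum]
      exact Finset.sum_congr rfl fun x _ => by ring
    have h3 : ∑ x, t ^ 2 * d x ^ 2 = t ^ 2 * D := by rw [hD, Finset.mul_sum]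
    rw [Finset.sum_add_distrib, Finset.sum_sub_distrib, h2, h3]
    ring
  have hle := hdual ξ' hfeas'
  rw [hval] at hle
  have hkey : t * (t * D) ≤ t * cg := mul_le_mul_of_nonneg_left htD ht0.le
  have hpos : 0 < t * cg := mul_pos ht0 hcgpos
  nlinarith

end Helpers

/-- optimality conditions for the primal/dual pair. -/
theorem primal_dual_optimality_conditions
    (p : ℕ) (hp : 1 ≤ p) (G : Finset (Finset (Fin p))) (η : Finset (Fin p) → ℝ)
    (hη : ∀ g ∈ G, 0 < η g) (hne : ∀ g ∈ G, g.Nonempty)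
    (lam : ℝ) (hlam : 0 < lam) (u : Fin p → ℝ)
    (w : Fin p → ℝ) (ξ : Finset (Fin p) → Fin p → ℝ)
    (hfeas : DualFeasible G η lam ξ) :
    ((∀ w', proxObj G η lam u w ≤ proxObj G η lam u w') ∧
      (∀ ξ', DualFeasible G η lam ξ' → dualObj G u ξ ≤ dualObj G u ξ'))
    ↔ ((w = fun j => u j - ∑ g ∈ G, ξ g j) ∧
        ∀ g ∈ G,
          ((∑ j ∈ g, w j * ξ g j = (⨆ j ∈ g, |w j|) * ∑ j, |ξ g j|) ∧
              ∑ j, |ξ g j| = lam * η g) ∨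
            (∀ j ∈ g, w j = 0)) := by
  have hp' : 0 < p := hp
  set r : Fin p → ℝ := fun j => u j - ∑ g ∈ G, ξ g j with hr
  have hsum_supp : ∀ g ∈ G, ∑ j, w j * ξ g j = ∑ j ∈ g, w j * ξ g j := by
    intro g hg
    refine (Finset.sum_subset g.subset_univ fun j _ hj => ?_).symm
    rw [(hfeas g hg).1 j hj, mul_zero]
  constructor
  · rintro ⟨hprimal, hdual⟩
    have hA : ∀ g ∈ G, ∑ j, r j * ξ g j = lam * η g * (⨆ j ∈ g, |r j|) :=
      fun g hg => dual_opt_inner hp' hη hne hlam u hfeas hdual hg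
    have hIr := key_identity G η lam u r ξ
    have hIw := key_identity G η lam u w ξ
    have hIr' : proxObj G η lam u r + dualObj G u ξ = (1 / 2) * ∑ j, (u j) ^ 2 := by
      rw [hIr]
      have h1 : ∑ j, (r j - (u j - ∑ g ∈ G, ξ g j)) ^ 2 = 0 :=
        Finset.sum_eq_zero fun j _ => by rw [hr]; ring
      have h2 : ∑ g ∈ G, (lam * η g * (⨆ j ∈ g, |r j|) - ∑ j, r j * ξ g j) = 0 :=
        Finset.sum_eq_zero fun g hg => by rw [hA g hg]; ring
      rw [h1, h2]; ring
    have hgapsw : (0:ℝ) ≤ ∑ g ∈ G, (lam * η g * (⨆ j ∈ g, |w j|) - ∑ j, w j * ξ g j) :=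
      Finset.sum_nonneg fun g hg => sub_nonneg.2 (gap_nonneg hp' hne hfeas w hg)
    have hwle : proxObj G η lam u w ≤ proxObj G η lam u r := hprimal r
    have hsqnn : (0:ℝ) ≤ ∑ j, (w j - (u j - ∑ g ∈ G, ξ g j)) ^ 2 :=
      Finset.sum_nonneg fun j _ => sq_nonneg _
    have hsq : ∑ j, (w j - (u j - ∑ g ∈ G, ξ g j)) ^ 2 ≤ 0 := by linarith
    have hw_eq : w = r := by
      funext j
      have hall : ∀ j ∈ Finset.univ, (w j - (u j - ∑ g ∈ G, ξ g j)) ^ 2 = 0 :=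
        (Finset.sum_eq_zero_iff_of_nonneg fun j _ => sq_nonneg _).1
          (le_antisymm hsq hsqnn)
      have := hall j (Finset.mem_univ j)
      have h0 : w j - (u j - ∑ g ∈ G, ξ g j) = 0 := by
        exact pow_eq_zero_iff two_ne_zero |>.1 this
      show w j = u j - ∑ g ∈ G, ξ g j
      linarith
    refine ⟨hw_eq, ?_⟩
    have hgap0 : ∀ g ∈ G, lam * η g * (⨆ j ∈ g, |w j|) = ∑ j, w j * ξ g j := by
      have hzero : ∑ g ∈ G, (lam * η g * (⨆ j ∈ g, |w j|) - ∑ j, w j * ξ g j) = 0 := by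
        have hwr : proxObj G η lam u w = proxObj G η lam u r := by rw [hw_eq]
        have h1 : ∑ j, (w j - (u j - ∑ g ∈ G, ξ g j)) ^ 2 = 0 := le_antisymm hsq hsqnn
        rw [h1] at hIw
        linarith
      intro g hg
      have := (Finset.sum_eq_zero_iff_of_nonneg fun g hg =>
        sub_nonneg.2 (gap_nonneg hp' hne hfeas w hg)).1 hzero g hg
      linarith
    intro g hg
    have hMnn : 0 ≤ ⨆ j ∈ g, |w j| := groupSup_nonneg hp' (hne g hg)
    by_cases hMz : (⨆ j ∈ g, |w j|) = 0
    · right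
      intro j hj
      have h1 := abs_le_groupSup hp' (w := w) hj
      rw [hMz] at h1
      exact abs_eq_zero.1 (le_antisymm h1 (abs_nonneg _))
    · left
      have hMpos : 0 < ⨆ j ∈ g, |w j| := lt_of_le_of_ne hMnn (Ne.symm hMz)
      have h1 : ∑ j, w j * ξ g j ≤ (⨆ j ∈ g, |w j|) * ∑ j, |ξ g j| :=
        inner_le_groupSup_mul hp' (hfeas g hg).1
      have h2 : (⨆ j ∈ g, |w j|) * ∑ j, |ξ g j| ≤ (⨆ j ∈ g, |w j|) * (lam * η g) :=
        mul_le_mul_of_nonneg_left (hfeas g hg).2 hMnn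
      have heq := hgap0 g hg
      have hnorm : ∑ j, |ξ g j| = lam * η g := by
        have h3 : (⨆ j ∈ g, |w j|) * ∑ j, |ξ g j| = (⨆ j ∈ g, |w j|) * (lam * η g) := by
          nlinarith
        exact mul_left_cancel₀ hMpos.ne' h3
      refine ⟨?_, hnorm⟩
      rw [← hsum_supp g hg, hnorm]
      nlinarith
  · rintro ⟨hw, hcond⟩
    have hgap0 : ∀ g ∈ G, lam * η g * (⨆ j ∈ g, |w j|) = ∑ j, w j * ξ g j := by
      intro g hg
      rcases hcond g hg with ⟨h1, h2⟩ | h0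
      · rw [hsum_supp g hg, h1, h2]; ring
      · have hz : ∑ j, w j * ξ g j = 0 := by
          refine Finset.sum_eq_zero fun j _ => ?_
          by_cases hj : j ∈ g
          · rw [h0 j hj, zero_mul]
          · rw [(hfeas g hg).1 j hj, mul_zero]
        have hM : (⨆ j ∈ g, |w j|) = 0 := by
          refine le_antisymm (groupSup_le hp' le_rfl fun j hj => ?_)
            (groupSup_nonneg hp' (hne g hg))
          rw [h0 j hj]; simp
        rw [hM, hz]; ring
    have hId := key_identity G η lam u w ξ
    have h1 : ∑ j, (w j - (u j - ∑ g ∈ G, ξ g j)) ^ 2 = 0 :=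
      Finset.sum_eq_zero fun j _ => by rw [hw]; ring
    have h2 : ∑ g ∈ G, (lam * η g * (⨆ j ∈ g, |w j|) - ∑ j, w j * ξ g j) = 0 :=
      Finset.sum_eq_zero fun g hg => by rw [hgap0 g hg]; ring
    rw [h1, h2] at hId
    have hopt : proxObj G η lam u w + dualObj G u ξ = (1 / 2) * ∑ j, (u j) ^ 2 := by
      rw [hId]; ring
    constructor
    · intro w'
      have := weak_duality hp' hne u w' hfeas
      linarith
    · intro ξ' hfeas'
      have := weak_duality hp' hne u w hfeas'
      linarith
end

section
/- (Variational formulation of the dual norm.) For every κ ∈ ℝ^p, Ω*(κ) equals the minimum, over all τ ≥ 0 and all families ξ = (ξ^g)_{g∈𝒢} of vectors in ℝ^p satisfying Σ_{g∈𝒢} ξ^g = κ, ξ^g_j = 0 for every j ∉ g, and ‖ξ^g‖₁ ≤ τη_g for every g ∈ 𝒢, of the value τ; in particular this minimum is attained. -/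
/-- The dual norm Ω*(κ) = sup { zᵀκ : Ω(z) ≤ 1 }. -/
noncomputable def dualNorm {p : ℕ} (G : Finset (Finset (Fin p))) (η : Finset (Fin p) → ℝ)
    (κ : Fin p → ℝ) : ℝ :=
  sSup { t : ℝ | ∃ z : Fin p → ℝ, Omega G η z ≤ 1 ∧ t = ∑ j, z j * κ j }

open scoped Pointwise

lemma isCompact_finsetSum {ι M : Type*} [AddCommMonoid M] [TopologicalSpace M] [ContinuousAdd M]
    {s : Finset ι} {K : ι → Set M} (hK : ∀ i ∈ s, IsCompact (K i)) :
    IsCompact (∑ i ∈ s, K i) := by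
  classical
  induction s using Finset.induction_on with
  | empty => simp
  | insert i s hi ih =>
    rw [Finset.sum_insert hi]
    exact (hK i (s.mem_insert_self i)).add (ih fun j hj => hK j (Finset.mem_insert_of_mem hj))

section GroupMax

variable {ι : Type*}

lemma le_biSup_abs [Finite ι] (w : ι → ℝ) {g : Finset ι} {i : ι} (hi : i ∈ g) :
    |w i| ≤ ⨆ j ∈ g, |w j| :=
  le_ciSup_of_le (Set.finite_range _).bddAbove i
    (le_ciSup_of_le (Set.finite_range _).bddAbove hi le_rfl)

lemma biSup_abs_nonneg (w : ι → ℝ) (g : Finset ι) : 0 ≤ ⨆ j ∈ g, |w j| :=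
  Real.iSup_nonneg fun _ => Real.iSup_nonneg fun _ => abs_nonneg _

lemma biSup_abs_le {w : ι → ℝ} {g : Finset ι} {c : ℝ} (hc : 0 ≤ c) (h : ∀ j ∈ g, |w j| ≤ c) :
    ⨆ j ∈ g, |w j| ≤ c :=
  Real.iSup_le (fun j => Real.iSup_le (h j) hc) hc

lemma biSup_abs_mul (w : ι → ℝ) (g : Finset ι) {c : ℝ} (hc : 0 ≤ c) :
    ⨆ j ∈ g, |c * w j| = c * ⨆ j ∈ g, |w j| := by
  simp_rw [Real.mul_iSup_of_nonneg hc, abs_mul, abs_of_nonneg hc]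

end GroupMax

section GroupBall

variable {ι : Type*} [Fintype ι]

def groupBall (g : Finset ι) (r : ℝ) : Set (ι → ℝ) :=
  {v | (∀ j ∉ g, v j = 0) ∧ ∑ j, |v j| ≤ r}

lemma isCompact_groupBall (g : Finset ι) (r : ℝ) : IsCompact (groupBall g r) := by
  refine Metric.isCompact_of_isClosed_isBounded ?_ ?_
  · have hsupp : IsClosed {v : ι → ℝ | ∀ j ∉ g, v j = 0} := by
      simp only [Set.ofPred_forall]
      exact isClosed_iInter fun j => isClosed_iInter fun _ =>
        isClosed_eq (continuous_apply j) continuous_const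
    exact hsupp.inter (isClosed_le (f := fun v : ι → ℝ => ∑ j, |v j|) (by fun_prop)
      continuous_const)
  · refine (Metric.isBounded_iff_subset_closedBall 0).2 ⟨r, fun v hv => ?_⟩
    have hr : 0 ≤ r := (Finset.sum_nonneg fun j _ => abs_nonneg (v j)).trans hv.2
    rw [mem_closedBall_zero_iff, pi_norm_le_iff_of_nonneg hr]
    exact fun i =>
      (Finset.single_le_sum (fun j _ => abs_nonneg (v j)) (Finset.mem_univ i)).trans hv.2

lemma convex_groupBall (g : Finset ι) (r : ℝ) : Convex ℝ (groupBall g r) := by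
  rintro v ⟨hv0, hv⟩ w ⟨hw0, hw⟩ a b ha hb hab
  refine ⟨fun j hj => by simp [hv0 j hj, hw0 j hj], ?_⟩
  calc ∑ j, |(a • v + b • w) j| ≤ ∑ j, (a * |v j| + b * |w j|) := by
        refine Finset.sum_le_sum fun j _ => ?_
        simpa [abs_mul, abs_of_nonneg ha, abs_of_nonneg hb] using abs_add_le (a * v j) (b * w j)
    _ = a * ∑ j, |v j| + b * ∑ j, |w j| := by
        rw [Finset.sum_add_distrib, Finset.mul_sum, Finset.mul_sum]
    _ ≤ a * r + b * r := by gcongr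
    _ = r := by rw [← add_mul, hab, one_mul]

lemma dotProduct_le_of_mem_groupBall {g : Finset ι} {r : ℝ} {v : ι → ℝ} (hv : v ∈ groupBall g r)
    (z : ι → ℝ) : z ⬝ᵥ v ≤ r * ⨆ j ∈ g, |z j| := by
  calc z ⬝ᵥ v ≤ ∑ j, (⨆ i ∈ g, |z i|) * |v j| := by
        refine Finset.sum_le_sum fun j _ => ?_
        by_cases hj : j ∈ g
        · calc z j * v j ≤ |z j| * |v j| := by rw [← abs_mul]; exact le_abs_self _
            _ ≤ (⨆ i ∈ g, |z i|) * |v j| := by gcongr; exact le_biSup_abs z hj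
        · simp [hv.1 j hj]
    _ = (⨆ i ∈ g, |z i|) * ∑ j, |v j| := by rw [Finset.mul_sum]
    _ ≤ (⨆ i ∈ g, |z i|) * r := by gcongr; exacts [biSup_abs_nonneg z g, hv.2]
    _ = r * ⨆ j ∈ g, |z j| := mul_comm _ _

lemma exists_mem_groupBall_dotProduct_eq (g : Finset ι) {r : ℝ} (hr : 0 ≤ r) (z : ι → ℝ) :
    ∃ v ∈ groupBall g r, z ⬝ᵥ v = r * ⨆ j ∈ g, |z j| := by
  classical
  rcases g.eq_empty_or_nonempty with rfl | hg
  · exact ⟨0, ⟨fun _ _ => rfl, by simpa using hr⟩, by simp⟩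
  obtain ⟨i, hi, hmax⟩ := g.exists_max_image (fun j => |z j|) hg
  have hsup : ⨆ j ∈ g, |z j| = |z i| :=
    (biSup_abs_le (abs_nonneg _) hmax).antisymm (le_biSup_abs z hi)
  refine ⟨Pi.single i (r * SignType.sign (z i)), ⟨fun j hj => ?_, ?_⟩, ?_⟩
  · exact Pi.single_eq_of_ne (by rintro rfl; exact hj hi) _
  · have hsign : |(SignType.sign (z i) : ℝ)| ≤ 1 := by
      rcases lt_trichotomy (z i) 0 with h | h | h <;> simp [h]
    rw [Finset.sum_eq_single i (fun j _ hj => by simp [hj]) (by simp)]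
    simpa [abs_mul, abs_of_nonneg hr] using mul_le_mul_of_nonneg_left hsign hr
  · rw [dotProduct_single, hsup, ← self_mul_sign]; ring

end GroupBall

section GroupBallSum

variable {ι : Type*} [Fintype ι] {G : Finset (Finset ι)} {r : Finset ι → ℝ}

lemma dotProduct_le_of_mem_sum_groupBall {x : ι → ℝ} (hx : x ∈ ∑ g ∈ G, groupBall g (r g))
    (z : ι → ℝ) : z ⬝ᵥ x ≤ ∑ g ∈ G, r g * ⨆ j ∈ g, |z j| := by
  obtain ⟨v, hv, rfl⟩ := (Set.mem_finsetSum _ _ _).1 hx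
  rw [dotProduct_sum]
  exact Finset.sum_le_sum fun g hg => dotProduct_le_of_mem_groupBall (hv hg) z

lemma exists_mem_sum_groupBall_dotProduct_eq (hr : ∀ g ∈ G, 0 ≤ r g) (z : ι → ℝ) :
    ∃ x ∈ ∑ g ∈ G, groupBall g (r g), z ⬝ᵥ x = ∑ g ∈ G, r g * ⨆ j ∈ g, |z j| := by
  have hv : ∀ g, ∃ v, g ∈ G → v ∈ groupBall g (r g) ∧ z ⬝ᵥ v = r g * ⨆ j ∈ g, |z j| := by
    intro g
    by_cases hg : g ∈ G
    · exact (exists_mem_groupBall_dotProduct_eq g (hr g hg) z).imp fun _ h _ => h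
    · exact ⟨0, fun h => absurd h hg⟩
  choose v hv using hv
  refine ⟨∑ g ∈ G, v g, (Set.mem_finsetSum _ _ _).2 ⟨v, fun hg => (hv _ hg).1, rfl⟩, ?_⟩
  rw [dotProduct_sum]
  exact Finset.sum_congr rfl fun g hg => (hv g hg).2

lemma convex_sum_groupBall : Convex ℝ (∑ g ∈ G, groupBall g (r g)) :=
  convex_sum _ fun g _ => convex_groupBall g (r g)

lemma isCompact_sum_groupBall : IsCompact (∑ g ∈ G, groupBall g (r g)) :=
  isCompact_finsetSum fun g _ => isCompact_groupBall g (r g)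

end GroupBallSum

section DualNorm

variable {p : ℕ} {G : Finset (Finset (Fin p))} {η : Finset (Fin p) → ℝ}

lemma mul_Omega_eq_sum (τ : ℝ) (z : Fin p → ℝ) :
    τ * Omega G η z = ∑ g ∈ G, τ * η g * ⨆ j ∈ g, |z j| := by
  simp only [Omega, Finset.mul_sum, mul_assoc]

lemma Omega_smul (z : Fin p → ℝ) {c : ℝ} (hc : 0 ≤ c) : Omega G η (c • z) = c * Omega G η z := by
  simp only [Omega, Pi.smul_apply, smul_eq_mul, biSup_abs_mul z _ hc, Finset.mul_sum]
  exact Finset.sum_congr rfl fun g _ => mul_left_comm (η g) c _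

lemma Omega_zero : Omega G η 0 = 0 := by
  simpa using Omega_smul (G := G) (η := η) 0 le_rfl

lemma Omega_nonneg (hη : ∀ g ∈ G, 0 ≤ η g) (z : Fin p → ℝ) : 0 ≤ Omega G η z :=
  Finset.sum_nonneg fun g hg => mul_nonneg (hη g hg) (biSup_abs_nonneg z g)

lemma mul_abs_le_Omega (hη : ∀ g ∈ G, 0 ≤ η g) (z : Fin p → ℝ) {g : Finset (Fin p)} (hg : g ∈ G)
    {j : Fin p} (hj : j ∈ g) : η g * |z j| ≤ Omega G η z :=
  calc η g * |z j| ≤ η g * ⨆ i ∈ g, |z i| := by gcongr; exacts [hη g hg, le_biSup_abs z hj]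
    _ ≤ Omega G η z := Finset.single_le_sum (f := fun g => η g * ⨆ i ∈ g, |z i|)
        (fun g hg => mul_nonneg (hη g hg) (biSup_abs_nonneg z g)) hg

lemma eq_zero_of_Omega_eq_zero (hη : ∀ g ∈ G, 0 < η g) (hcover : ∀ j : Fin p, ∃ g ∈ G, j ∈ g)
    {z : Fin p → ℝ} (hz : Omega G η z = 0) : z = 0 := by
  funext j
  obtain ⟨g, hg, hj⟩ := hcover j
  have h := mul_abs_le_Omega (fun g hg => (hη g hg).le) z hg hj
  rw [hz, ← mul_zero (η g)] at h
  exact abs_nonpos_iff.1 (le_of_mul_le_mul_left h (hη g hg))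

lemma bddAbove_dualNorm_set (hη : ∀ g ∈ G, 0 < η g) (hcover : ∀ j : Fin p, ∃ g ∈ G, j ∈ g)
    (κ : Fin p → ℝ) :
    BddAbove {t : ℝ | ∃ z : Fin p → ℝ, Omega G η z ≤ 1 ∧ t = ∑ j, z j * κ j} := by
  choose g hgG hjg using hcover
  refine ⟨∑ j, |κ j| / η (g j), ?_⟩
  rintro _ ⟨z, hz, rfl⟩
  refine Finset.sum_le_sum fun j _ => ?_
  have hzj : |z j| ≤ 1 / η (g j) := by
    rw [le_div_iff₀ (hη _ (hgG j)), mul_comm]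
    exact (mul_abs_le_Omega (fun g hg => (hη g hg).le) z (hgG j) (hjg j)).trans hz
  calc z j * κ j ≤ |z j| * |κ j| := abs_mul (z j) (κ j) ▸ le_abs_self _
    _ ≤ 1 / η (g j) * |κ j| := by gcongr
    _ = |κ j| / η (g j) := one_div_mul_eq_div _ _

lemma dualNorm_nonneg (hη : ∀ g ∈ G, 0 < η g) (hcover : ∀ j : Fin p, ∃ g ∈ G, j ∈ g)
    (κ : Fin p → ℝ) : 0 ≤ dualNorm G η κ :=
  le_csSup (bddAbove_dualNorm_set hη hcover κ) ⟨0, by simp [Omega_zero], by simp⟩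

lemma dotProduct_le_dualNorm_mul_Omega (hη : ∀ g ∈ G, 0 < η g)
    (hcover : ∀ j : Fin p, ∃ g ∈ G, j ∈ g) (κ z : Fin p → ℝ) :
    z ⬝ᵥ κ ≤ dualNorm G η κ * Omega G η z := by
  rcases (Omega_nonneg (fun g hg => (hη g hg).le) z).eq_or_lt with hz | hz
  · simp [eq_zero_of_Omega_eq_zero hη hcover hz.symm, Omega_zero]
  have hmem : (Omega G η z)⁻¹ • z ⬝ᵥ κ ≤ dualNorm G η κ :=
    le_csSup (bddAbove_dualNorm_set hη hcover κ)
      ⟨_, by rw [Omega_smul z (inv_nonneg.2 hz.le), inv_mul_cancel₀ hz.ne'], rfl⟩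
  rwa [smul_dotProduct, smul_eq_mul, inv_mul_le_iff₀ hz, mul_comm] at hmem

lemma dualNorm_le_of_mem_sum_groupBall {τ : ℝ} (hτ : 0 ≤ τ) {κ : Fin p → ℝ}
    (hκ : κ ∈ ∑ g ∈ G, groupBall g (τ * η g)) : dualNorm G η κ ≤ τ := by
  refine csSup_le ⟨0, 0, by simp [Omega_zero], by simp⟩ ?_
  rintro _ ⟨z, hz, rfl⟩
  calc z ⬝ᵥ κ ≤ ∑ g ∈ G, τ * η g * ⨆ j ∈ g, |z j| := dotProduct_le_of_mem_sum_groupBall hκ z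
    _ = τ * Omega G η z := (mul_Omega_eq_sum τ z).symm
    _ ≤ τ := mul_le_of_le_one_right hτ hz

lemma mem_sum_groupBall_dualNorm (hη : ∀ g ∈ G, 0 < η g) (hcover : ∀ j : Fin p, ∃ g ∈ G, j ∈ g)
    (κ : Fin p → ℝ) : κ ∈ ∑ g ∈ G, groupBall g (dualNorm G η κ * η g) := by
  by_contra hκ
  obtain ⟨f, u, hfK, hfκ⟩ :=
    geometric_hahn_banach_closed_point convex_sum_groupBall isCompact_sum_groupBall.isClosed hκ
  set z : Fin p → ℝ := fun i => f (Pi.single i 1)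
  have hf : ∀ x, f x = z ⬝ᵥ x := fun x => by
    conv_lhs => rw [pi_eq_sum_univ' x]
    simp [dotProduct, z, mul_comm]
  obtain ⟨x, hxK, hx⟩ := exists_mem_sum_groupBall_dotProduct_eq
    (fun g hg => mul_nonneg (dualNorm_nonneg hη hcover κ) (hη g hg).le) z
  have hlt : z ⬝ᵥ x < z ⬝ᵥ κ := by simpa only [hf] using (hfK x hxK).trans hfκ
  rw [hx, ← mul_Omega_eq_sum] at hlt
  exact hlt.not_ge (dotProduct_le_dualNorm_mul_Omega hη hcover κ z)

end DualNorm

theorem dualNorm_variational_general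
    (p : ℕ) (G : Finset (Finset (Fin p))) (η : Finset (Fin p) → ℝ)
    (hη : ∀ g ∈ G, 0 < η g)
    (hcover : ∀ j : Fin p, ∃ g ∈ G, j ∈ g) (κ : Fin p → ℝ) :
    ∃ (τ : ℝ) (ξ : Finset (Fin p) → Fin p → ℝ),
      0 ≤ τ ∧
      (∀ j, ∑ g ∈ G, ξ g j = κ j) ∧
      (∀ g ∈ G, ∀ j, j ∉ g → ξ g j = 0) ∧
      (∀ g ∈ G, ∑ j, |ξ g j| ≤ τ * η g) ∧
      dualNorm G η κ = τ ∧
      (∀ (τ' : ℝ) (ξ' : Finset (Fin p) → Fin p → ℝ),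
        0 ≤ τ' →
        (∀ j, ∑ g ∈ G, ξ' g j = κ j) →
        (∀ g ∈ G, ∀ j, j ∉ g → ξ' g j = 0) →
        (∀ g ∈ G, ∑ j, |ξ' g j| ≤ τ' * η g) →
        τ ≤ τ') := by
  obtain ⟨ξ, hξ, hsum⟩ := (Set.mem_finsetSum _ _ _).1 (mem_sum_groupBall_dualNorm hη hcover κ)
  refine ⟨dualNorm G η κ, ξ, dualNorm_nonneg hη hcover κ, fun j => ?_, fun g hg => (hξ hg).1,
    fun g hg => (hξ hg).2, rfl, fun τ' ξ' hτ' hsum' hsupp' hl1' => ?_⟩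
  · rw [← hsum, Finset.sum_apply]
  · refine dualNorm_le_of_mem_sum_groupBall hτ' ((Set.mem_finsetSum _ _ _).2
      ⟨ξ', fun hg => ⟨hsupp' _ hg, hl1' _ hg⟩, funext fun j => ?_⟩)
    rw [Finset.sum_apply, hsum']

/-- variational formulation of the dual norm; the minimum is attained
    and equals Ω*(κ). -/
theorem dualNorm_variational
    (p : ℕ) (hp : 1 ≤ p) (G : Finset (Finset (Fin p))) (η : Finset (Fin p) → ℝ)
    (hη : ∀ g ∈ G, 0 < η g) (hne : ∀ g ∈ G, g.Nonempty)
    (hcover : ∀ j : Fin p, ∃ g ∈ G, j ∈ g) (κ : Fin p → ℝ) :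
    ∃ (τ : ℝ) (ξ : Finset (Fin p) → Fin p → ℝ),
      0 ≤ τ ∧
      (∀ j, ∑ g ∈ G, ξ g j = κ j) ∧
      (∀ g ∈ G, ∀ j, j ∉ g → ξ g j = 0) ∧
      (∀ g ∈ G, ∑ j, |ξ g j| ≤ τ * η g) ∧
      dualNorm G η κ = τ ∧
      (∀ (τ' : ℝ) (ξ' : Finset (Fin p) → Fin p → ℝ),
        0 ≤ τ' →
        (∀ j, ∑ g ∈ G, ξ' g j = κ j) →
        (∀ g ∈ G, ∀ j, j ∉ g → ξ' g j = 0) →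
        (∀ g ∈ G, ∑ j, |ξ' g j| ≤ τ' * η g) →
        τ ≤ τ') :=
  dualNorm_variational_general p G η hη hcover κ
end

section
/- (Characterization of the Euclidean projection onto an ℓ₁-ball.) Let u ∈ ℝ^p, C > 0, and let γ ∈ ℝ^p satisfy ‖γ‖₁ ≤ C. Then γ is the Euclidean projection of u onto the ℓ₁-ball {v ∈ ℝ^p : ‖v‖₁ ≤ C} if and only if either γ = u, or ( Σ_{j∈[p]} (u_j − γ_j)γ_j = (max_{j∈[p]}|u_j − γ_j|)·‖γ‖₁ and ‖γ‖₁ = C ). -/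
/-- characterization of the Euclidean projection of u onto the
    ℓ₁-ball of radius C: a point γ with ‖γ‖₁ ≤ C is the projection iff either
    γ = u, or ( Σ_j (u_j−γ_j)γ_j = (max_j |u_j−γ_j|)·‖γ‖₁ and ‖γ‖₁ = C ). -/
theorem l1_ball_projection_characterization
    (p : ℕ) (hp : 1 ≤ p) (u : Fin p → ℝ) (C : ℝ) (hC : 0 < C)
    (γ : Fin p → ℝ) (hγ : ∑ j, |γ j| ≤ C) :
    (∀ v : Fin p → ℝ, (∑ j, |v j| ≤ C) →
        ∑ j, (u j - γ j) ^ 2 ≤ ∑ j, (u j - v j) ^ 2)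
    ↔ (γ = u ∨
        ((∑ j, (u j - γ j) * γ j = (⨆ j, |u j - γ j|) * ∑ j, |γ j|) ∧
          ∑ j, |γ j| = C)) := by
  have hpne : Nonempty (Fin p) := ⟨⟨0, hp⟩⟩
  obtain ⟨j0, hj0⟩ := Finite.exists_max (fun j => |u j - γ j|)
  set M : ℝ := |u j0 - γ j0| with hMdef
  have hiSup : (⨆ j, |u j - γ j|) = M := by
    rw [hMdef]
    exact le_antisymm (ciSup_le hj0)
      (le_ciSup (Set.Finite.bddAbove (Set.finite_range fun j => |u j - γ j|)) j0)
  have hM0 : 0 ≤ M := abs_nonneg _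
  set S : ℝ := ∑ j, (u j - γ j) * γ j with hSdef
  set G : ℝ := ∑ j, |γ j| with hGdef
  -- the key algebraic identity
  have key : ∀ v : Fin p → ℝ, ∑ j, (u j - v j) ^ 2 =
      ∑ j, (u j - γ j) ^ 2
        - 2 * ((∑ j, (u j - γ j) * v j) - S) + ∑ j, (v j - γ j) ^ 2 := by
    intro v
    rw [hSdef, ← Finset.sum_sub_distrib, Finset.mul_sum, ← Finset.sum_sub_distrib,
      ← Finset.sum_add_distrib]
    exact Finset.sum_congr rfl fun j _ => by ring
  -- bound on inner products with points of the ball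
  have hbound : ∀ v : Fin p → ℝ, (∑ j, |v j| ≤ C) →
      ∑ j, (u j - γ j) * v j ≤ M * ∑ j, |v j| := by
    intro v hv
    calc ∑ j, (u j - γ j) * v j ≤ ∑ j, M * |v j| := by
          apply Finset.sum_le_sum
          intro j _
          calc (u j - γ j) * v j ≤ |(u j - γ j) * v j| := le_abs_self _
            _ = |u j - γ j| * |v j| := abs_mul _ _
            _ ≤ M * |v j| := mul_le_mul_of_nonneg_right (hj0 j) (abs_nonneg _)
      _ = M * ∑ j, |v j| := (Finset.mul_sum _ _ _).symm
  have hSle : S ≤ M * G := hbound γ hγ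
  have hGC : G ≤ C := hγ
  -- step 1: projection ↔ supporting hyperplane inequality
  have step1 : (∀ v : Fin p → ℝ, (∑ j, |v j| ≤ C) →
        ∑ j, (u j - γ j) ^ 2 ≤ ∑ j, (u j - v j) ^ 2)
      ↔ (∀ v : Fin p → ℝ, (∑ j, |v j| ≤ C) →
        ∑ j, (u j - γ j) * v j ≤ S) := by
    constructor
    · intro hproj v hv
      by_contra hlt
      push_neg at hlt
      set S' : ℝ := (∑ j, (u j - γ j) * v j) - S with hS'def
      have hS'pos : 0 < S' := by simp only [hS'def]; linarith
      set Q : ℝ := ∑ j, (v j - γ j) ^ 2 with hQdef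
      have hQ0 : 0 ≤ Q := Finset.sum_nonneg fun j _ => sq_nonneg _
      have hQpos : 0 < Q := by
        rcases lt_or_eq_of_le hQ0 with h | h
        · exact h
        · exfalso
          have hvγ : ∀ j, v j = γ j := by
            intro j
            have := (Finset.sum_eq_zero_iff_of_nonneg
              (fun j _ => sq_nonneg (v j - γ j))).mp h.symm j (Finset.mem_univ j)
            have := pow_eq_zero_iff (n := 2) (by norm_num) |>.mp this
            linarith
          have : S' = 0 := by
            simp only [hS'def, hSdef]
            have : (∑ j, (u j - γ j) * v j) = ∑ j, (u j - γ j) * γ j :=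
              Finset.sum_congr rfl fun j _ => by rw [hvγ j]
            linarith
          linarith
      set t : ℝ := min 1 (S' / Q) with htdef
      have ht0 : 0 < t := lt_min one_pos (div_pos hS'pos hQpos)
      have ht1 : t ≤ 1 := min_le_left _ _
      have htQ : t * Q ≤ S' := by
        have : t ≤ S' / Q := min_le_right _ _
        calc t * Q ≤ (S' / Q) * Q := mul_le_mul_of_nonneg_right this hQ0
          _ = S' := by field_simp
      set w : Fin p → ℝ := fun j => γ j + t * (v j - γ j) with hwdef
      have hwball : ∑ j, |w j| ≤ C := by
        have : ∀ j, |w j| ≤ (1 - t) * |γ j| + t * |v j| := by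
          intro j
          have : w j = (1 - t) * γ j + t * v j := by simp [hwdef]; ring
          rw [this]
          calc |(1 - t) * γ j + t * v j| ≤ |(1 - t) * γ j| + |t * v j| := abs_add_le _ _
            _ = (1 - t) * |γ j| + t * |v j| := by
                rw [abs_mul, abs_mul, abs_of_nonneg (by linarith : (0:ℝ) ≤ 1 - t),
                  abs_of_nonneg ht0.le]
        calc ∑ j, |w j| ≤ ∑ j, ((1 - t) * |γ j| + t * |v j|) :=
              Finset.sum_le_sum fun j _ => this j
          _ = (1 - t) * G + t * (∑ j, |v j|) := by
              rw [Finset.sum_add_distrib, ← Finset.mul_sum, ← Finset.mul_sum, hGdef]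
          _ ≤ (1 - t) * C + t * C := by
              have h1 : (1 - t) * G ≤ (1 - t) * C :=
                mul_le_mul_of_nonneg_left hGC (by linarith)
              have h2 : t * (∑ j, |v j|) ≤ t * C :=
                mul_le_mul_of_nonneg_left hv ht0.le
              linarith
          _ = C := by ring
      have hproj_w := hproj w hwball
      have hw1 : (∑ j, (u j - γ j) * w j) - S = t * S' := by
        simp only [hS'def, hSdef]
        rw [← Finset.sum_sub_distrib, ← Finset.sum_sub_distrib, Finset.mul_sum]
        apply Finset.sum_congr rfl
        intro j _
        simp only [hwdef]
        ring
      have hw2 : ∑ j, (w j - γ j) ^ 2 = t ^ 2 * Q := by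
        simp only [hQdef]
        rw [Finset.mul_sum]
        apply Finset.sum_congr rfl
        intro j _
        simp only [hwdef]
        ring
      rw [key w, hw1, hw2] at hproj_w
      -- 0 ≤ -2 t S' + t² Q
      nlinarith [mul_pos ht0 hS'pos, mul_le_mul_of_nonneg_left htQ ht0.le]
    · intro hsupp v hv
      rw [key v]
      have h1 := hsupp v hv
      have h2 : (0:ℝ) ≤ ∑ j, (v j - γ j) ^ 2 :=
        Finset.sum_nonneg fun j _ => sq_nonneg _
      linarith
  -- step 2: supporting inequality ↔ C * M ≤ S
  have step2 : (∀ v : Fin p → ℝ, (∑ j, |v j| ≤ C) →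
        ∑ j, (u j - γ j) * v j ≤ S) ↔ C * M ≤ S := by
    constructor
    · intro hsupp
      set w : Fin p → ℝ := fun j =>
        if j = j0 then (if 0 ≤ u j0 - γ j0 then C else -C) else 0 with hwdef
      have habs : ∀ j, |w j| = if j = j0 then C else 0 := by
        intro j
        simp only [hwdef]
        by_cases h : j = j0 <;> simp [h]
        split <;> simp [abs_of_nonneg hC.le, abs_of_nonpos (by linarith : -C ≤ 0)]
      have hwball : ∑ j, |w j| ≤ C := by
        have : ∑ j, |w j| = C := by
          rw [Finset.sum_congr rfl fun j _ => habs j]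
          simp
        linarith
      have hwinner : ∑ j, (u j - γ j) * w j = C * M := by
        have : ∀ j, (u j - γ j) * w j = if j = j0 then C * M else 0 := by
          intro j
          simp only [hwdef]
          by_cases h : j = j0
          · subst h
            by_cases hs : 0 ≤ u j - γ j
            · simp [hs, hMdef, abs_of_nonneg hs]; ring
            · simp [hs, hMdef, abs_of_neg (lt_of_not_ge hs)]; ring
          · simp [h]
        rw [Finset.sum_congr rfl fun j _ => this j]
        simp
      have := hsupp w hwball
      rw [hwinner] at this
      exact this
    · intro hCM v hv
      calc ∑ j, (u j - γ j) * v j ≤ M * ∑ j, |v j| := hbound v hv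
        _ ≤ M * C := mul_le_mul_of_nonneg_left hv hM0
        _ = C * M := mul_comm _ _
        _ ≤ S := hCM
  rw [step1, step2, hiSup]
  -- step 3: C * M ≤ S ↔ RHS
  constructor
  · intro hCM
    by_cases hgu : γ = u
    · exact Or.inl hgu
    · right
      have hMpos : 0 < M := by
        rcases lt_or_eq_of_le hM0 with h | h
        · exact h
        · exfalso
          apply hgu
          funext j
          have h1 := hj0 j
          rw [← h] at h1
          have : |u j - γ j| = 0 := le_antisymm h1 (abs_nonneg _)
          have := abs_eq_zero.mp this
          linarith
      have hMGC : M * G ≤ M * C := mul_le_mul_of_nonneg_left hGC hM0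
      have hSMG : S = M * G := le_antisymm hSle (by linarith [mul_comm M C ▸ hCM])
      have hGCeq : G = C := by
        have : M * G = M * C := by nlinarith
        exact mul_left_cancel₀ (ne_of_gt hMpos) this
      exact ⟨by rw [hSMG], hGCeq⟩
  · rintro (hgu | ⟨hS, hG⟩)
    · have hM0' : M = 0 := by
        rw [hMdef, hgu]
        simp
      have hS0 : S = 0 := by
        rw [hSdef, hgu]
        simp
      rw [hM0', hS0]
      simp
    · rw [hS, hG]
      linarith [mul_comm C M]
end
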